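/- Let Ω ⊆ ℝⁿ be a bounded open set, U an open set whose closure is compact and contained in Ω, q ∈ (0,1), c > 0, and f : ℝ → ℝ continuous with t ↦ f(t)/t^q positive and non-increasing on (0, c). Let ṽ : closure(U) → ℝ be continuous with ṽ > 0 and sup ṽ < c^{1−q}, and suppose ṽ is a viscosity supersolution in U of min{ |∇w̃| − (1−q) f(w̃^{1/(1−q)}) / w̃^{q/(1−q)}, −Δ_∞ w̃ − (q/(1−q)) |∇w̃|⁴ / w̃ } = 0. For ε > 0 set ṽ_ε := (1+ε)(ṽ + ε). Then ṽ_ε → ṽ uniformly on closure(U) as ε → 0, and for every sufficiently small ε > 0 there exists a constant C > 0 (depending on ε, q, and sup ṽ) such that sup ṽ_ε < c^{1−q} and ṽ_ε is a strict viscosity supersolution in U: for every x₀ ∈ U and every C² function φ such that ṽ_ε − φ attains a local minimum at x₀, both |∇φ(x₀)| − (1−q) f(ṽ_ε(x₀)^{1/(1−q)}) / ṽ_ε(x₀)^{q/(1−q)} ≥ C and −⟨D²φ(x₀)∇φ(x₀), ∇φ(x₀)⟩ − (q/(1−q)) |∇φ(x₀)|⁴ / ṽ_ε(x₀) ≥ C.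 -/

import Mathlib

/-!
If `φ` touches `ṽ_ε = (1+ε)(ṽ+ε)` from below at `x₀`, then `φ/(1+ε)` touches `ṽ` from below
there, so the supersolution inequalities for `ṽ` hold with `|∇φ|` scaled by `1/(1+ε)` and
`Δ_∞φ` by `1/(1+ε)³`. Since `f(t)/t^q` is non-increasing, so is the first-order term
`(1-q) f(v^{1/(1-q)}) / v^{q/(1-q)}` as a function of `v`: replacing `ṽ` by the larger `ṽ_ε`
only lowers it, and the factor `1+ε` in front of `|∇φ|` leaves a margin of `ε` times its value
at `sup ṽ_ε`. That margin also bounds `|∇φ|` from below, which turns the gap between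
`|∇φ|⁴/((1+ε)ṽ)` and `|∇φ|⁴/ṽ_ε` into a positive constant.
-/

open Real Set Metric Filter Topology

/-- `⟨D²φ(x)∇φ(x), ∇φ(x)⟩`, i.e. `Δ_∞φ(x)`. -/
noncomputable def hessQ {n : ℕ} (φ : EuclideanSpace ℝ (Fin n) → ℝ)
    (x : EuclideanSpace ℝ (Fin n)) : ℝ :=
  iteratedFDeriv ℝ 2 φ x ![gradient φ x, gradient φ x]

/-- Viscosity supersolution of `min{|∇w| − f(w), −Δ_∞ w} = 0` in `Ω`. -/
def IsFSuper {n : ℕ} (Ω : Set (EuclideanSpace ℝ (Fin n))) (f : ℝ → ℝ)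
    (w : EuclideanSpace ℝ (Fin n) → ℝ) : Prop :=
  ∀ x₀ ∈ Ω, ∀ φ : EuclideanSpace ℝ (Fin n) → ℝ, ContDiff ℝ 2 φ →
    IsLocalMinOn (fun x => w x - φ x) Ω x₀ →
    (0 ≤ ‖gradient φ x₀‖ - f (w x₀) ∧ 0 ≤ -(hessQ φ x₀))

/-- Viscosity subsolution of `min{|∇w| − f(w), −Δ_∞ w} = 0` in `Ω`. -/
def IsFSub {n : ℕ} (Ω : Set (EuclideanSpace ℝ (Fin n))) (f : ℝ → ℝ)
    (w : EuclideanSpace ℝ (Fin n) → ℝ) : Prop :=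
  ∀ x₀ ∈ Ω, ∀ φ : EuclideanSpace ℝ (Fin n) → ℝ, ContDiff ℝ 2 φ →
    IsLocalMaxOn (fun x => w x - φ x) Ω x₀ →
    min (‖gradient φ x₀‖ - f (w x₀)) (-(hessQ φ x₀)) ≤ 0

/-- Viscosity supersolution of the transformed equation
`min{ |∇w̃| − (1−q) f(w̃^{1/(1−q)})/w̃^{q/(1−q)}, −Δ_∞ w̃ − (q/(1−q))|∇w̃|⁴/w̃ } = 0` in `U`. -/
def IsTransfSuper {n : ℕ} (U : Set (EuclideanSpace ℝ (Fin n))) (f : ℝ → ℝ) (q : ℝ)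
    (w : EuclideanSpace ℝ (Fin n) → ℝ) : Prop :=
  ∀ x₀ ∈ U, ∀ φ : EuclideanSpace ℝ (Fin n) → ℝ, ContDiff ℝ 2 φ →
    IsLocalMinOn (fun x => w x - φ x) U x₀ →
    (0 ≤ ‖gradient φ x₀‖ - (1 - q) * f (w x₀ ^ (1 / (1 - q))) / w x₀ ^ (q / (1 - q)) ∧
     0 ≤ -(hessQ φ x₀) - (q / (1 - q)) * ‖gradient φ x₀‖ ^ 4 / w x₀)

lemma gradient_const_mul {F : Type*} [NormedAddCommGroup F] [InnerProductSpace ℝ F]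
    [CompleteSpace F] {φ : F → ℝ} {x : F} (hφ : DifferentiableAt ℝ φ x) (a : ℝ) :
    gradient (fun y => a * φ y) x = a • gradient φ x := by
  simp only [gradient, ← smul_eq_mul, fderiv_fun_const_smul hφ, map_smul]

lemma hessQ_const_mul {n : ℕ} {φ : EuclideanSpace ℝ (Fin n) → ℝ} {x : EuclideanSpace ℝ (Fin n)}
    (hφ : ContDiffAt ℝ 2 φ x) (a : ℝ) :
    hessQ (fun y => a * φ y) x = a ^ 3 * hessQ φ x := by
  have hv : ![a • gradient φ x, a • gradient φ x] =
      fun i => (fun _ => a) i • ![gradient φ x, gradient φ x] i := by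
    ext i
    fin_cases i <;> rfl
  rw [hessQ, hessQ, gradient_const_mul (hφ.differentiableAt (by norm_num)), hv]
  simp only [← smul_eq_mul, iteratedFDeriv_const_smul_apply' hφ]
  rw [smul_apply, ContinuousMultilinearMap.map_smul_univ]
  simp only [Finset.prod_const, Finset.card_univ, Fintype.card_fin, smul_eq_mul]
  ring

noncomputable def transfGradTerm (f : ℝ → ℝ) (q v : ℝ) : ℝ :=
  (1 - q) * f (v ^ (1 / (1 - q))) / v ^ (q / (1 - q))

section TransfGradTerm

variable {f : ℝ → ℝ} {q c : ℝ}

lemma transfGradTerm_eq {v : ℝ} (hv : 0 ≤ v) :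
    transfGradTerm f q v = (1 - q) * (f (v ^ (1 / (1 - q))) / (v ^ (1 / (1 - q))) ^ q) := by
  rw [transfGradTerm, ← Real.rpow_mul hv, one_div_mul_eq_div, mul_div_assoc]

lemma rpow_one_div_one_sub_lt {v : ℝ} (hv : 0 ≤ v) (hq : q < 1) (hc : 0 < c)
    (hvc : v < c ^ (1 - q)) : v ^ (1 / (1 - q)) < c := by
  rwa [one_div, Real.rpow_inv_lt_iff_of_pos hv hc.le (by linarith)]

lemma transfGradTerm_pos (hq : q < 1) (hc : 0 < c)
    (hf_pos : ∀ t : ℝ, 0 < t → t < c → 0 < f t / t ^ q) {v : ℝ} (hv : 0 < v)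
    (hvc : v < c ^ (1 - q)) : 0 < transfGradTerm f q v := by
  rw [transfGradTerm_eq hv.le]
  exact mul_pos (by linarith)
    (hf_pos _ (Real.rpow_pos_of_pos hv _) (rpow_one_div_one_sub_lt hv.le hq hc hvc))

lemma transfGradTerm_antitone (hq : q < 1) (hc : 0 < c)
    (hf_mono : ∀ s t : ℝ, 0 < s → s ≤ t → t < c → f t / t ^ q ≤ f s / s ^ q) {u v : ℝ}
    (hu : 0 < u) (huv : u ≤ v) (hvc : v < c ^ (1 - q)) :
    transfGradTerm f q v ≤ transfGradTerm f q u := by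
  rw [transfGradTerm_eq hu.le, transfGradTerm_eq (hu.le.trans huv)]
  refine mul_le_mul_of_nonneg_left ?_ (by linarith)
  exact hf_mono _ _ (Real.rpow_pos_of_pos hu _)
    (Real.rpow_le_rpow hu.le huv (one_div_nonneg.2 (by linarith)))
    (rpow_one_div_one_sub_lt (hu.le.trans huv) hq hc hvc)

end TransfGradTerm

section Perturbation

variable {n : ℕ} {U : Set (EuclideanSpace ℝ (Fin n))} {f : ℝ → ℝ} {q c : ℝ}
  {w : EuclideanSpace ℝ (Fin n) → ℝ}

theorem IsTransfSuper.le_of_isLocalMinOn_affine (hw : IsTransfSuper U f q w) {a b : ℝ}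
    (ha : 0 < a) {x₀ : EuclideanSpace ℝ (Fin n)} (hx₀ : x₀ ∈ U)
    {φ : EuclideanSpace ℝ (Fin n) → ℝ} (hφ : ContDiff ℝ 2 φ)
    (hmin : IsLocalMinOn (fun x => a * (w x + b) - φ x) U x₀) :
    a * transfGradTerm f q (w x₀) ≤ ‖gradient φ x₀‖ ∧
      q / (1 - q) * ‖gradient φ x₀‖ ^ 4 / (a * w x₀) ≤ -hessQ φ x₀ := by
  have hψmin : IsLocalMinOn (fun x => w x - a⁻¹ * φ x) U x₀ := by
    have hmono : Monotone fun t : ℝ => a⁻¹ * t - b := fun s t hst => by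
      have := mul_le_mul_of_nonneg_left hst (inv_pos.2 ha).le
      linarith
    convert hmin.comp_mono hmono using 1
    funext x
    simp only [Function.comp_apply]
    field_simp
    ring
  obtain ⟨hgrad, hhess⟩ := hw x₀ hx₀ _ (contDiff_const.mul hφ) hψmin
  rw [gradient_const_mul (hφ.differentiable (by norm_num)).differentiableAt, norm_smul,
    Real.norm_eq_abs, abs_of_pos (inv_pos.2 ha)] at hgrad hhess
  rw [hessQ_const_mul hφ.contDiffAt] at hhess
  constructor
  · have := mul_le_mul_of_nonneg_left (sub_nonneg.1 hgrad) ha.le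
    rwa [mul_inv_cancel_left₀ ha.ne'] at this
  · have := mul_le_mul_of_nonneg_left (sub_nonneg.1 hhess) (pow_pos ha 3).le
    have hlhs : q / (1 - q) * ‖gradient φ x₀‖ ^ 4 / (a * w x₀) =
        a ^ 3 * (q / (1 - q) * (a⁻¹ * ‖gradient φ x₀‖) ^ 4 / w x₀) := by
      field_simp
    have hrhs : -hessQ φ x₀ = a ^ 3 * -(a⁻¹ ^ 3 * hessQ φ x₀) := by
      field_simp
    rwa [hlhs, hrhs]

theorem IsTransfSuper.exists_strict_perturbation (hw : IsTransfSuper U f q w)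
    (hq : q ∈ Ioo (0 : ℝ) 1) (hc : 0 < c)
    (hf_pos : ∀ t : ℝ, 0 < t → t < c → 0 < f t / t ^ q)
    (hf_mono : ∀ s t : ℝ, 0 < s → s ≤ t → t < c → f t / t ^ q ≤ f s / s ^ q)
    (hw_pos : ∀ x ∈ U, 0 < w x) {ε M : ℝ} (hε : 0 < ε) (hM : 0 < M)
    (hwM : ∀ x ∈ U, (1 + ε) * (w x + ε) ≤ M) (hMc : M < c ^ (1 - q)) :
    ∃ C > (0 : ℝ), ∀ x₀ ∈ U, ∀ φ : EuclideanSpace ℝ (Fin n) → ℝ, ContDiff ℝ 2 φ →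
      IsLocalMinOn (fun x => (1 + ε) * (w x + ε) - φ x) U x₀ →
      C ≤ ‖gradient φ x₀‖ - transfGradTerm f q ((1 + ε) * (w x₀ + ε)) ∧
      C ≤ -hessQ φ x₀ - q / (1 - q) * ‖gradient φ x₀‖ ^ 4 / ((1 + ε) * (w x₀ + ε)) := by
  obtain ⟨hq0, hq1⟩ := hq
  set κ := transfGradTerm f q M
  have hκ : 0 < κ := transfGradTerm_pos hq1 hc hf_pos hM hMc
  have hQ : 0 < q / (1 - q) := div_pos hq0 (by linarith)
  refine ⟨min (ε * κ) (q / (1 - q) * κ ^ 4 * ε / M ^ 2), by positivity, ?_⟩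
  intro x₀ hx₀ φ hφ hmin
  obtain ⟨hgrad, hhess⟩ := hw.le_of_isLocalMinOn_affine (by linarith) hx₀ hφ hmin
  set v := w x₀
  set u := (1 + ε) * (v + ε) with hu
  set N := ‖gradient φ x₀‖
  have hv : 0 < v := hw_pos x₀ hx₀
  have hvu : v ≤ u := by nlinarith
  have huM : u ≤ M := hwM x₀ hx₀
  have hκv : κ ≤ transfGradTerm f q v :=
    transfGradTerm_antitone hq1 hc hf_mono hv (hvu.trans huM) hMc
  have huv : transfGradTerm f q u ≤ transfGradTerm f q v :=
    transfGradTerm_antitone hq1 hc hf_mono hv hvu (huM.trans_lt hMc)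
  have hκN : κ ≤ N := by nlinarith
  constructor
  · calc min (ε * κ) _ ≤ ε * κ := min_le_left _ _
      _ ≤ ε * transfGradTerm f q v := by gcongr
      _ ≤ N - transfGradTerm f q u := by linarith
  · have hvuM : v * u ≤ M ^ 2 := by nlinarith
    calc min _ (q / (1 - q) * κ ^ 4 * ε / M ^ 2) ≤ q / (1 - q) * κ ^ 4 * ε / M ^ 2 :=
          min_le_right _ _
      _ ≤ q / (1 - q) * N ^ 4 * ε / (v * u) := by gcongr
      _ = q / (1 - q) * N ^ 4 / ((1 + ε) * v) - q / (1 - q) * N ^ 4 / u := by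
          rw [hu]
          field_simp
          ring
      _ ≤ -hessQ φ x₀ - q / (1 - q) * N ^ 4 / u := by linarith

end Perturbation

theorem tendstoUniformlyOn_one_add_mul_add {α : Type*} {v : α → ℝ} {s : Set α}
    (hv : Bornology.IsBounded (v '' s)) :
    TendstoUniformlyOn (fun ε x => (1 + ε) * (v x + ε)) v (𝓝 0) s := by
  obtain ⟨R, hR, hvR⟩ := hv.exists_pos_norm_le
  rw [Metric.tendstoUniformlyOn_iff]
  intro η hη
  have hδ : 0 < min 1 (η / (R + 2)) := lt_min one_pos (by positivity)
  filter_upwards [Metric.ball_mem_nhds 0 hδ] with ε hε x hx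
  rw [mem_ball, dist_zero_right, Real.norm_eq_abs, lt_min_iff, lt_div_iff₀ (by linarith)] at hε
  have hvx := abs_le.1 (hvR _ (mem_image_of_mem v hx))
  have hε1 := abs_lt.1 hε.1
  calc dist (v x) ((1 + ε) * (v x + ε)) = |ε| * |v x + 1 + ε| := by
        rw [Real.dist_eq, ← abs_mul, ← abs_neg]
        ring_nf
    _ ≤ |ε| * (R + 2) := by gcongr; exact abs_le.2 ⟨by linarith, by linarith⟩
    _ < η := hε.2

theorem strict_supersolution_perturbation_general {n : ℕ}
    (U : Set (EuclideanSpace ℝ (Fin n)))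
    (hUc : IsCompact (closure U))
    (q : ℝ) (hq : q ∈ Set.Ioo (0:ℝ) 1) (c : ℝ) (hc : 0 < c)
    (f : ℝ → ℝ)
    (hf_pos : ∀ t : ℝ, 0 < t → t < c → 0 < f t / t ^ q)
    (hf_mono : ∀ s t : ℝ, 0 < s → s ≤ t → t < c → f t / t ^ q ≤ f s / s ^ q)
    (tv : EuclideanSpace ℝ (Fin n) → ℝ)
    (htv_cont : ContinuousOn tv (closure U))
    (htv_pos : ∀ x ∈ closure U, 0 < tv x)
    (htv_small : sSup (tv '' closure U) < c ^ (1 - q))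
    (htv_super : IsTransfSuper U f q tv) :
    TendstoUniformlyOn (fun (ε : ℝ) (x : EuclideanSpace ℝ (Fin n)) => (1 + ε) * (tv x + ε))
        tv (nhdsWithin 0 (Set.Ioi 0)) (closure U) ∧
    ∃ ε₀ > (0:ℝ), ∀ ε : ℝ, 0 < ε → ε < ε₀ → ∃ C > (0:ℝ),
      sSup ((fun x => (1 + ε) * (tv x + ε)) '' closure U) < c ^ (1 - q) ∧
      ∀ x₀ ∈ U, ∀ φ : EuclideanSpace ℝ (Fin n) → ℝ, ContDiff ℝ 2 φ →
        IsLocalMinOn (fun x => (1 + ε) * (tv x + ε) - φ x) U x₀ →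
        (C ≤ ‖gradient φ x₀‖ -
            (1 - q) * f (((1 + ε) * (tv x₀ + ε)) ^ (1 / (1 - q))) /
              ((1 + ε) * (tv x₀ + ε)) ^ (q / (1 - q)) ∧
         C ≤ -(hessQ φ x₀) -
            (q / (1 - q)) * ‖gradient φ x₀‖ ^ 4 / ((1 + ε) * (tv x₀ + ε))) := by
  have hbdd := hUc.image_of_continuousOn htv_cont
  set S := sSup (tv '' closure U)
  have hS : ∀ x ∈ closure U, tv x ≤ S := fun x hx =>
    le_csSup hbdd.bddAbove (mem_image_of_mem tv hx)
  have hS0 : 0 ≤ S := Real.sSup_nonneg (by rintro _ ⟨x, hx, rfl⟩; exact (htv_pos x hx).le)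
  refine ⟨fun u hu => (tendstoUniformlyOn_one_add_mul_add hbdd.isBounded u hu).filter_mono
    nhdsWithin_le_nhds, ?_⟩
  have hsmall : ∀ᶠ ε in 𝓝[>] 0, (1 + ε) * (S + ε) < c ^ (1 - q) := by
    refine Filter.Tendsto.eventually_lt_const htv_small (tendsto_nhdsWithin_of_tendsto_nhds ?_)
    simpa using (show Continuous fun ε : ℝ => (1 + ε) * (S + ε) by fun_prop).tendsto 0
  obtain ⟨ε₀, hε₀, hsub⟩ := mem_nhdsGT_iff_exists_Ioo_subset.1 hsmall
  refine ⟨ε₀, hε₀, fun ε hε hεε₀ => ?_⟩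
  have hMc : (1 + ε) * (S + ε) < c ^ (1 - q) := hsub ⟨hε, hεε₀⟩
  have hbound : ∀ x ∈ closure U, (1 + ε) * (tv x + ε) ≤ (1 + ε) * (S + ε) := fun x hx => by
    gcongr
    exact hS x hx
  obtain ⟨C, hC, hstrict⟩ := htv_super.exists_strict_perturbation hq hc hf_pos hf_mono
    (fun x hx => htv_pos x (subset_closure hx)) hε (by positivity)
    (fun x hx => hbound x (subset_closure hx)) hMc
  refine ⟨C, hC, ?_, hstrict⟩
  exact (Real.sSup_le (by rintro _ ⟨x, hx, rfl⟩; exact hbound x hx) (by positivity)).trans_lt hMc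

/-- The perturbations `ṽ_ε = (1+ε)(ṽ+ε)` of a supersolution `ṽ` of the
transformed equation converge uniformly to `ṽ` and, for small `ε`, are strict
supersolutions. -/
theorem strict_supersolution_perturbation {n : ℕ} (Ω : Set (EuclideanSpace ℝ (Fin n)))
    (hΩo : IsOpen Ω) (hΩb : Bornology.IsBounded Ω)
    (U : Set (EuclideanSpace ℝ (Fin n))) (hUo : IsOpen U)
    (hUc : IsCompact (closure U)) (hUΩ : closure U ⊆ Ω)
    (q : ℝ) (hq : q ∈ Set.Ioo (0:ℝ) 1) (c : ℝ) (hc : 0 < c)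
    (f : ℝ → ℝ) (hf : Continuous f)
    (hf_pos : ∀ t : ℝ, 0 < t → t < c → 0 < f t / t ^ q)
    (hf_mono : ∀ s t : ℝ, 0 < s → s ≤ t → t < c → f t / t ^ q ≤ f s / s ^ q)
    (tv : EuclideanSpace ℝ (Fin n) → ℝ)
    (htv_cont : ContinuousOn tv (closure U))
    (htv_pos : ∀ x ∈ closure U, 0 < tv x)
    (htv_small : sSup (tv '' closure U) < c ^ (1 - q))
    (htv_super : IsTransfSuper U f q tv) :
    TendstoUniformlyOn (fun (ε : ℝ) (x : EuclideanSpace ℝ (Fin n)) => (1 + ε) * (tv x + ε))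
        tv (nhdsWithin 0 (Set.Ioi 0)) (closure U) ∧
    ∃ ε₀ > (0:ℝ), ∀ ε : ℝ, 0 < ε → ε < ε₀ → ∃ C > (0:ℝ),
      sSup ((fun x => (1 + ε) * (tv x + ε)) '' closure U) < c ^ (1 - q) ∧
      ∀ x₀ ∈ U, ∀ φ : EuclideanSpace ℝ (Fin n) → ℝ, ContDiff ℝ 2 φ →
        IsLocalMinOn (fun x => (1 + ε) * (tv x + ε) - φ x) U x₀ →
        (C ≤ ‖gradient φ x₀‖ -
            (1 - q) * f (((1 + ε) * (tv x₀ + ε)) ^ (1 / (1 - q))) /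
              ((1 + ε) * (tv x₀ + ε)) ^ (q / (1 - q)) ∧
         C ≤ -(hessQ φ x₀) -
            (q / (1 - q)) * ‖gradient φ x₀‖ ^ 4 / ((1 + ε) * (tv x₀ + ε))) :=
  strict_supersolution_perturbation_general U hUc q hq c hc f hf_pos hf_mono tv htv_cont htv_pos
    htv_small htv_super
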